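/- Let p be an odd prime and 0 ≤ s < n. In F_p[y_1,...,y_n]: [0,1,...,ŝ,...,n-1, n+1] = L_n · (Q_{n,n-1}^p · Q_{n,s} − Q_{n,s-1}^p), where Q_{n,-1} := 0 and the left side is the determinant with exponent sequence 0,1,...,n-1 omitting s and with n+1 appended. -/
import Mathlib


open MvPolynomial Finset

/-- `br p e = det (y_i ^ (p ^ e_j))` in `F_p[y_1,…,y_n]`. -/
noncomputable def br (p : ℕ) {n : ℕ} (e : Fin n → ℕ) : MvPolynomial (Fin n) (ZMod p) :=
  Matrix.det (Matrix.of fun i j : Fin n => (X i : MvPolynomial (Fin n) (ZMod p)) ^ p ^ e j)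

/-- `L_n = [0,1,…,n-1]`. -/
noncomputable def Lpoly (p n : ℕ) : MvPolynomial (Fin n) (ZMod p) :=
  br p (fun j : Fin n => (j : ℕ))

/-- `L_{n,s} = [0,…,ŝ,…,n]`. -/
noncomputable def Ls (p n s : ℕ) : MvPolynomial (Fin n) (ZMod p) :=
  br p (fun j : Fin n => if (j : ℕ) < s then (j : ℕ) else (j : ℕ) + 1)


abbrev Rng (p n : ℕ) := MvPolynomial (Fin n) (ZMod p)


lemma prodXpow {σ R : Type*} [CommSemiring R] [DecidableEq σ] {ι : Type*} (t : Finset ι)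
    (g : ι → σ) (a : ι → ℕ) :
    (∏ i ∈ t, (X (g i) : MvPolynomial σ R) ^ a i)
      = monomial (∑ i ∈ t, Finsupp.single (g i) (a i)) 1 := by
  induction t using Finset.cons_induction with
  | empty => simp
  | cons x t hx ih =>
      rw [Finset.prod_cons, Finset.sum_cons, ih, X_pow_eq_monomial, monomial_mul, one_mul]

lemma Ls_n (p n : ℕ) : Ls p n n = Lpoly p n := by
  unfold Ls Lpoly br
  congr 1
  ext i j
  simp [j.isLt]

lemma Lpoly_ne_zero (p n : ℕ) (hp : p.Prime) : Lpoly p n ≠ 0 := by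
  haveI := Fact.mk hp
  intro h
  have hc : coeff (∑ j : Fin n, Finsupp.single j (p ^ (j : ℕ))) (Lpoly p n) = 1 := by
    unfold Lpoly br
    rw [Matrix.det_apply]
    have hterm : ∀ σ : Equiv.Perm (Fin n),
        (∏ i, (Matrix.of fun i j : Fin n =>
          (X i : MvPolynomial (Fin n) (ZMod p)) ^ p ^ (j : ℕ)) (σ i) i)
        = monomial (∑ i : Fin n, Finsupp.single (σ i) (p ^ (i : ℕ))) 1 := by
      intro σ
      exact prodXpow Finset.univ σ (fun i => p ^ (i : ℕ))
    rw [coeff_sum]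
    rw [Finset.sum_eq_single (1 : Equiv.Perm (Fin n))]
    · rw [Units.smul_def, coeff_smul, hterm, coeff_monomial]
      simp
    · intro σ _ hσ
      rw [Units.smul_def, coeff_smul, hterm, coeff_monomial, if_neg, smul_zero]
      intro hd
      apply hσ
      have hd' : (∑ i : Fin n, Finsupp.single (σ i) (p ^ (i : ℕ)))
          = ∑ i : Fin n, Finsupp.single i (p ^ ((σ⁻¹ i : Fin n) : ℕ)) := by
        rw [← Equiv.sum_comp σ (fun i => Finsupp.single i (p ^ ((σ⁻¹ i : Fin n) : ℕ)))]
        simp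
      rw [hd'] at hd
      have hval : ∀ j : Fin n, p ^ ((σ⁻¹ j : Fin n) : ℕ) = p ^ (j : ℕ) := by
        intro j
        have := DFunLike.congr_fun hd j
        simpa [Finsupp.finset_sum_apply, Finsupp.single_apply] using this
      have : ∀ j : Fin n, σ⁻¹ j = j := by
        intro j
        have := Nat.pow_right_injective hp.two_le (hval j)
        exact Fin.ext this
      ext j
      have := this (σ j)
      simp at this
      rw [← this]
      simp
    · simp
  rw [h, coeff_zero] at hc
  exact one_ne_zero hc.symm

lemma fundamental (p n : ℕ) (i : Fin n) :
    ∑ c : Fin (n + 1), (-1 : MvPolynomial (Fin n) (ZMod p)) ^ (n + (c : ℕ)) *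
      ((X i : MvPolynomial (Fin n) (ZMod p)) ^ p ^ (c : ℕ) * Ls p n (c : ℕ)) = 0 := by
  classical
  set R := MvPolynomial (Fin n) (ZMod p)
  set w : Fin (n + 1) → R := Fin.snoc (fun j : Fin n => (X j : R)) (X i) with hw
  set A : Matrix (Fin (n + 1)) (Fin (n + 1)) R :=
    Matrix.of (fun r c : Fin (n + 1) => w r ^ p ^ (c : ℕ)) with hA
  have h0 : A.det = 0 := by
    apply Matrix.det_zero_of_row_eq (Fin.castSucc_lt_last i).ne
    funext c
    simp [hA, hw, Fin.snoc_castSucc, Fin.snoc_last]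
  have hexp := Matrix.det_succ_row A (Fin.last n)
  rw [h0] at hexp
  have hsub : ∀ c : Fin (n + 1),
      (A.submatrix (Fin.last n).succAbove c.succAbove).det = Ls p n (c : ℕ) := by
    intro c
    unfold Ls br
    congr 1
    ext r j
    rw [Fin.succAbove_last]
    have hval : ((c.succAbove j : Fin (n+1)) : ℕ) =
        if (j : ℕ) < (c : ℕ) then (j : ℕ) else (j : ℕ) + 1 := by
      by_cases hjc : (j : ℕ) < (c : ℕ)
      · rw [Fin.succAbove_of_castSucc_lt c j (by simpa [Fin.lt_def] using hjc), if_pos hjc]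
        rfl
      · rw [Fin.succAbove_of_le_castSucc c j (by simpa [Fin.le_def] using Nat.le_of_not_lt hjc),
          if_neg hjc]
        rfl
    simp [hA, hw, Fin.snoc_castSucc, hval]
  calc
    ∑ c : Fin (n + 1), (-1 : R) ^ (n + (c : ℕ)) * ((X i : R) ^ p ^ (c : ℕ) * Ls p n (c : ℕ))
        = ∑ c : Fin (n + 1), (-1 : R) ^ ((Fin.last n : ℕ) + (c : ℕ)) * A (Fin.last n) c *
            (A.submatrix (Fin.last n).succAbove c.succAbove).det := by
          refine Finset.sum_congr rfl fun c _ => ?_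
          rw [hsub c, mul_assoc]
          simp [hA, hw, Fin.snoc_last]
    _ = 0 := hexp.symm

lemma key (p n : ℕ) (hp : p.Prime) (Qe : ℤ → Rng p n)
    (hQe : ∀ t : ℤ, 0 ≤ t → t < n → Lpoly p n * Qe t = Ls p n t.toNat) (i : Fin n) :
    (X i : Rng p n) ^ p ^ n =
      ∑ k ∈ range n, (-1 : Rng p n) ^ (n + k + 1) * Qe (k : ℤ) * (X i : Rng p n) ^ p ^ k := by
  haveI := Fact.mk hp
  have hf := fundamental p n i
  rw [Fin.sum_univ_castSucc] at hf
  simp only [Fin.coe_castSucc, Fin.val_last] at hf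
  rw [Ls_n p n] at hf
  have hfin : (∑ c : Fin n, (-1 : Rng p n) ^ (n + (c : ℕ)) * ((X i : Rng p n) ^ p ^ (c : ℕ) * Ls p n (c : ℕ)))
      = ∑ k ∈ range n, (-1 : Rng p n) ^ (n + k) * ((X i : Rng p n) ^ p ^ k * Ls p n k) :=
    Fin.sum_univ_eq_sum_range (fun k => (-1 : Rng p n) ^ (n + k) * ((X i : Rng p n) ^ p ^ k * Ls p n k)) n
  rw [hfin] at hf
  have hnn : (-1 : Rng p n) ^ (n + n) = 1 := Even.neg_one_pow ⟨n, rfl⟩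
  rw [hnn, one_mul] at hf
  have hmain : Lpoly p n * ((X i : Rng p n) ^ p ^ n -
      ∑ k ∈ range n, (-1 : Rng p n) ^ (n + k + 1) * Qe (k : ℤ) * (X i : Rng p n) ^ p ^ k) = 0 := by
    rw [mul_sub, Finset.mul_sum]
    have h2 : ∀ k ∈ range n, Lpoly p n * ((-1 : Rng p n) ^ (n + k + 1) * Qe (k : ℤ) * (X i : Rng p n) ^ p ^ k)
        = -((-1 : Rng p n) ^ (n + k) * ((X i : Rng p n) ^ p ^ k * Ls p n k)) := by
      intro k hk
      have hq := hQe (k : ℤ) (by positivity) (by exact_mod_cast mem_range.mp hk)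
      rw [Int.toNat_natCast] at hq
      rw [pow_succ]
      calc Lpoly p n * ((-1 : Rng p n) ^ (n + k) * -1 * Qe (k : ℤ) * (X i : Rng p n) ^ p ^ k)
          = -((-1 : Rng p n) ^ (n + k) * ((X i : Rng p n) ^ p ^ k * (Lpoly p n * Qe (k : ℤ)))) := by ring
        _ = -((-1 : Rng p n) ^ (n + k) * ((X i : Rng p n) ^ p ^ k * Ls p n k)) := by rw [hq]
    rw [Finset.sum_congr rfl h2, Finset.sum_neg_distrib, sub_neg_eq_add]
    calc Lpoly p n * (X i : Rng p n) ^ p ^ n +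
        ∑ k ∈ range n, (-1 : Rng p n) ^ (n + k) * ((X i : Rng p n) ^ p ^ k * Ls p n k)
        = (∑ k ∈ range n, (-1 : Rng p n) ^ (n + k) * ((X i : Rng p n) ^ p ^ k * Ls p n k)) +
            (X i : Rng p n) ^ p ^ n * Lpoly p n := by ring
      _ = 0 := hf
  rcases mul_eq_zero.mp hmain with h | h
  · exact absurd h (Lpoly_ne_zero p n hp)
  · exact sub_eq_zero.mp h


lemma keyP (p n : ℕ) (hp : p.Prime) (hodd : Odd p)
    (Qe : ℤ → Rng p n)
    (hQe : ∀ t : ℤ, 0 ≤ t → t < n → Lpoly p n * Qe t = Ls p n t.toNat) (i : Fin n) :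
    (X i : Rng p n) ^ p ^ (n + 1) =
      ∑ k ∈ range n, (-1 : Rng p n) ^ (n + k + 1) *
        Qe (k : ℤ) ^ p * (X i : Rng p n) ^ p ^ (k + 1) := by
  haveI := Fact.mk hp
  have hk := congrArg (· ^ p) (key p n hp Qe hQe i)
  rw [← pow_mul, ← pow_succ, sum_pow_char] at hk
  rw [hk]
  refine Finset.sum_congr rfl fun k _ => ?_
  rw [mul_pow, mul_pow, ← pow_mul ((-1 : Rng p n)), mul_comm (n + k + 1) p, pow_mul,
    hodd.neg_one_pow, ← pow_mul (X i : Rng p n), ← pow_succ]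

lemma det_upd_sum {n' : Type*} [DecidableEq n'] [Fintype n'] {R : Type*} [CommRing R]
    (M : Matrix n' n' R) (j : n') {ι : Type*} (t : Finset ι) (f : ι → n' → R) :
    (M.updateCol j (fun i => ∑ k ∈ t, f k i)).det
      = ∑ k ∈ t, (M.updateCol j (f k)).det := by
  classical
  induction t using Finset.cons_induction with
  | empty =>
      rw [Finset.sum_empty]
      apply Matrix.det_eq_zero_of_column_eq_zero j
      intro i
      simp [Matrix.updateCol_self]
  | cons x t hx ih =>
      rw [Finset.sum_cons, ← ih,
        show (fun i => ∑ k ∈ Finset.cons x t hx, f k i)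
          = (f x + fun i => ∑ k ∈ t, f k i) from funext fun i => by
            rw [Finset.sum_cons]; rfl,
        Matrix.det_updateCol_add]

set_option maxHeartbeats 1000000 in
/-- For `0 ≤ s < n`:
`[0,…,ŝ,…,n-1, n+1] = L_n · (Q_{n,n-1}^p · Q_{n,s} − Q_{n,s-1}^p)`, with `Q_{n,-1} = 0`.
Here `Qe : ℤ → _` encodes the Dickson invariants with the convention `Qe t = 0` for `t < 0`. -/
theorem stmt8 (p n s : ℕ) (hp : p.Prime) (hodd : Odd p) (hs : s < n)
    (Qe : ℤ → MvPolynomial (Fin n) (ZMod p))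
    (hQe : ∀ t : ℤ, 0 ≤ t → t < n → Lpoly p n * Qe t = Ls p n t.toNat)
    (hQneg : ∀ t : ℤ, t < 0 → Qe t = 0) :
    br p (fun j : Fin n =>
        if (j : ℕ) < s then (j : ℕ) else if (j : ℕ) + 1 < n then (j : ℕ) + 1 else n + 1) =
      Lpoly p n * ((Qe ((n : ℤ) - 1)) ^ p * Qe s - (Qe ((s : ℤ) - 1)) ^ p) := by
  classical
  haveI := Fact.mk hp
  obtain ⟨m, rfl⟩ : ∃ m, n = m + 1 := ⟨n - 1, by omega⟩
  have hsm : s ≤ m := by omega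
  set lt : Fin (m + 1) := ⟨m, Nat.lt_succ_self m⟩ with hltdef
  have hltval : (lt : ℕ) = m := rfl
  set M0 : Matrix (Fin (m + 1)) (Fin (m + 1)) (Rng p (m + 1)) :=
    Matrix.of (fun i j : Fin (m + 1) =>
      (X i : Rng p (m + 1)) ^ p ^ (if (j : ℕ) < s then (j : ℕ) else (j : ℕ) + 1)) with hM0
  set v : ℕ → Fin (m + 1) → Rng p (m + 1) :=
    fun e i => (X i : Rng p (m + 1)) ^ p ^ e with hv
  -- Step 1 : LHS as an updated determinant
  have h1 : br p (fun j : Fin (m + 1) =>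
        if (j : ℕ) < s then (j : ℕ) else if (j : ℕ) + 1 < m + 1 then (j : ℕ) + 1 else (m + 1) + 1)
      = (M0.updateCol lt (v (m + 2))).det := by
    unfold br
    refine congrArg Matrix.det (Matrix.ext fun i j => ?_)
    rw [Matrix.updateCol_apply, Matrix.of_apply]
    beta_reduce
    by_cases hj : j = lt
    · rw [if_pos hj, hj]
      have h1' : ¬ ((lt : ℕ) < s) := by omega
      have h2' : ¬ ((lt : ℕ) + 1 < m + 1) := by omega
      rw [if_neg h1', if_neg h2']
    · have hjm : (j : ℕ) < m := by
        have h' := j.isLt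
        have : (j : ℕ) ≠ m := fun h => hj (Fin.ext (by rw [hltval, h]))
        omega
      rw [if_neg hj, hM0, Matrix.of_apply]
      by_cases hjs : (j : ℕ) < s
      · simp [hjs]
      · simp [hjs, show (j : ℕ) + 1 < m + 1 from by omega]
  -- Step 2 : expand the last column
  have hcol : v (m + 2) = fun i => ∑ k ∈ range (m + 1),
      ((-1 : Rng p (m + 1)) ^ (m + 1 + k + 1) * Qe (k : ℤ) ^ p) • v (k + 1) i := by
    funext i
    rw [hv]
    simp only [smul_eq_mul]
    rw [show m + 2 = (m + 1) + 1 from rfl, keyP p (m + 1) hp hodd Qe hQe i]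
  have h2 : (M0.updateCol lt (v (m + 2))).det
      = ∑ k ∈ range (m + 1), ((-1 : Rng p (m + 1)) ^ (m + 1 + k + 1) * Qe (k : ℤ) ^ p) *
          (M0.updateCol lt (v (k + 1))).det := by
    rw [hcol, det_upd_sum]
    exact Finset.sum_congr rfl fun k _ => by
      rw [show (fun i => ((-1 : Rng p (m + 1)) ^ (m + 1 + k + 1) * Qe (k : ℤ) ^ p) • v (k + 1) i)
          = ((-1 : Rng p (m + 1)) ^ (m + 1 + k + 1) * Qe (k : ℤ) ^ p) • v (k + 1) from rfl,
        Matrix.det_updateCol_smul]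
  -- Step 3 : vanishing terms
  have hzero : ∀ k, k < m + 1 → k ≠ m → k + 1 ≠ s →
      (M0.updateCol lt (v (k + 1))).det = 0 := by
    intro k hk hkm hks
    have hk1 : k + 1 < m + 1 := by omega
    by_cases hlt' : k + 1 < s
    · refine Matrix.det_zero_of_column_eq (M := M0.updateCol lt (v (k + 1)))
        (i := (⟨k + 1, hk1⟩ : Fin (m + 1))) (j := lt)
        (Fin.ne_of_val_ne (show k + 1 ≠ m by omega)) fun r => ?_
      rw [Matrix.updateCol_apply, Matrix.updateCol_apply,
        if_neg (Fin.ne_of_val_ne (show k + 1 ≠ m by omega) :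
          (⟨k + 1, hk1⟩ : Fin (m + 1)) ≠ lt), if_pos rfl, hM0]
      simp [hlt', hv]
    · have hsk : ¬ ((k : ℕ) < s) := by omega
      refine Matrix.det_zero_of_column_eq (M := M0.updateCol lt (v (k + 1)))
        (i := (⟨k, by omega⟩ : Fin (m + 1))) (j := lt)
        (Fin.ne_of_val_ne (show k ≠ m from hkm)) fun r => ?_
      rw [Matrix.updateCol_apply, Matrix.updateCol_apply,
        if_neg (Fin.ne_of_val_ne (show k ≠ m from hkm) : (⟨k, by omega⟩ : Fin (m + 1)) ≠ lt),
        if_pos rfl, hM0]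
      simp [hsk, hv]
  -- Step 4 : the k = m term
  have hmterm : (M0.updateCol lt (v (m + 1))).det = Lpoly p (m + 1) * Qe (s : ℤ) := by
    have hmat : M0.updateCol lt (v (m + 1)) = Matrix.of (fun i j : Fin (m + 1) =>
        (X i : Rng p (m + 1)) ^ p ^ (if (j : ℕ) < s then (j : ℕ) else (j : ℕ) + 1)) := by
      refine Matrix.ext fun i j => ?_
      rw [Matrix.updateCol_apply, Matrix.of_apply]
      by_cases hj : j = lt
      · rw [if_pos hj, hj, if_neg (show ¬ ((lt : ℕ) < s) by omega)]
      · rw [if_neg hj, hM0, Matrix.of_apply]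
    rw [hmat]
    have hq := hQe (s : ℤ) (by positivity) (by exact_mod_cast hs)
    rw [Int.toNat_natCast] at hq
    rw [hq]
    rfl
  -- Step 5 : the k = s - 1 term (for s ≥ 1)
  have hsterm : 1 ≤ s → (M0.updateCol lt (v s)).det
      = (-1 : Rng p (m + 1)) ^ (m - s) * Lpoly p (m + 1) := by
    intro hs1
    set i0 : Fin (m + 1) := ⟨m - s, by omega⟩ with hi0
    have hi0val : (i0 : ℕ) = m - s := rfl
    set τ : Equiv.Perm (Fin (m + 1)) := Fin.revPerm * Fin.cycleRange i0 * Fin.revPerm with hτ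
    have happ : ∀ j : Fin (m + 1), τ j = Fin.rev (Fin.cycleRange i0 (Fin.rev j)) := by
      intro j
      simp [hτ, Equiv.Perm.mul_apply]
    have hNL : (Matrix.of (fun i j : Fin (m + 1) => (X i : Rng p (m + 1)) ^ p ^ (j : ℕ)))
        = (M0.updateCol lt (v s)).submatrix id τ := by
      refine Matrix.ext fun i j => ?_
      rw [Matrix.submatrix_apply, id_eq, Matrix.of_apply]
      have hjle : (j : ℕ) < m + 1 := j.isLt
      rcases lt_trichotomy (j : ℕ) s with hcase | hcase | hcase
      · have hrev : i0 < Fin.rev j := by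
          rw [Fin.lt_def, Fin.val_rev]
          omega
        have hτj : τ j = j := by
          rw [happ, Fin.cycleRange_of_gt hrev, Fin.rev_rev]
        rw [hτj, Matrix.updateCol_apply,
          if_neg (Fin.ne_of_val_ne (show (j : ℕ) ≠ m by omega)), hM0, Matrix.of_apply,
          if_pos hcase]
      · have hrev : Fin.rev j = i0 := by
          apply Fin.ext
          rw [Fin.val_rev, hi0val]
          omega
        have hτj : τ j = lt := by
          rw [happ, hrev, Fin.cycleRange_of_eq rfl]
          apply Fin.ext
          rw [Fin.val_rev, hltval]
          have h0 : ((0 : Fin (m + 1)) : ℕ) = 0 := rfl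
          omega
        rw [hτj, Matrix.updateCol_apply, if_pos rfl, hv]
        rw [hcase]
      · have hrev : Fin.rev j < i0 := by
          rw [Fin.lt_def, Fin.val_rev]
          omega
        have hrevlast : Fin.rev j < Fin.last m := by
          rw [Fin.lt_def, Fin.val_rev, Fin.val_last]
          omega
        have hτj : τ j = ⟨(j : ℕ) - 1, by omega⟩ := by
          rw [happ, Fin.cycleRange_of_lt hrev]
          apply Fin.ext
          rw [Fin.val_rev, Fin.val_add_one_of_lt hrevlast, Fin.val_rev]
          show m + 1 - (m + 1 - ((j : ℕ) + 1) + 1 + 1) = (j : ℕ) - 1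
          omega
        rw [hτj, Matrix.updateCol_apply,
          if_neg (Fin.ne_of_val_ne (show (j : ℕ) - 1 ≠ m by omega)), hM0, Matrix.of_apply,
          if_neg (show ¬ ((j : ℕ) - 1 < s) by omega)]
        show (X i : Rng p (m + 1)) ^ p ^ (j : ℕ) = (X i : Rng p (m + 1)) ^ p ^ ((j : ℕ) - 1 + 1)
        rw [show (j : ℕ) - 1 + 1 = (j : ℕ) from by omega]
    have hsign : Equiv.Perm.sign τ = (-1 : ℤˣ) ^ (m - s) := by
      rw [hτ, map_mul, map_mul, Fin.sign_cycleRange, mul_right_comm, Int.units_mul_self,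
        one_mul]
    have hperm := Matrix.det_permute' τ (M0.updateCol lt (v s))
    rw [← hNL, hsign] at hperm
    have hL : Lpoly p (m + 1)
        = (-1 : Rng p (m + 1)) ^ (m - s) * (M0.updateCol lt (v s)).det := by
      calc Lpoly p (m + 1)
          = (Matrix.of (fun i j : Fin (m + 1) => (X i : Rng p (m + 1)) ^ p ^ (j : ℕ))).det := rfl
        _ = (((-1 : ℤˣ) ^ (m - s) : ℤˣ) : ℤ) * (M0.updateCol lt (v s)).det := by
            exact_mod_cast hperm
        _ = (-1 : Rng p (m + 1)) ^ (m - s) * (M0.updateCol lt (v s)).det := by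
            push_cast
            ring
    rw [hL, ← mul_assoc, ← pow_add, Even.neg_one_pow ⟨m - s, rfl⟩, one_mul]
  -- Step 6 : assemble
  rw [h1, h2]
  by_cases hs0 : s = 0
  · subst hs0
    rw [Finset.sum_eq_single m]
    · rw [hmterm]
      have h01 : ((0 : ℕ) : ℤ) - 1 = (-1 : ℤ) := by norm_num
      rw [h01, hQneg (-1 : ℤ) (by norm_num), zero_pow hp.ne_zero]
      have heven : (-1 : Rng p (m + 1)) ^ (m + 1 + m + 1) = 1 :=
        Even.neg_one_pow ⟨m + 1, by ring⟩
      rw [heven]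
      have hcast : Qe ((m : ℤ)) = Qe (((m + 1 : ℕ) : ℤ) - 1) := by
        congr 1
        push_cast
        ring
      rw [← hcast]
      ring
    · intro k hk hkm
      rw [hzero k (mem_range.mp hk) hkm (by omega), mul_zero]
    · intro h
      exact absurd (mem_range.mpr (Nat.lt_succ_self m)) h
  · have hs1 : 1 ≤ s := by omega
    have hsub : ({s - 1, m} : Finset ℕ) ⊆ range (m + 1) := by
      intro x hx
      rcases Finset.mem_insert.mp hx with h | h
      · rw [h]; exact mem_range.mpr (by omega)
      · rw [Finset.mem_singleton.mp h]; exact mem_range.mpr (by omega)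
    have hvan : ∀ x ∈ range (m + 1), x ∉ ({s - 1, m} : Finset ℕ) →
        ((-1 : Rng p (m + 1)) ^ (m + 1 + x + 1) * Qe (x : ℤ) ^ p) *
          (M0.updateCol lt (v (x + 1))).det = 0 := by
      intro k hk hknotin
      have hkm : k ≠ m := fun h => hknotin (by simp [h])
      have hks : k + 1 ≠ s := fun h => hknotin (by simp [show k = s - 1 by omega])
      rw [hzero k (mem_range.mp hk) hkm hks, mul_zero]
    rw [← Finset.sum_subset hsub hvan, Finset.sum_pair (show s - 1 ≠ m by omega),
      show s - 1 + 1 = s from by omega, hsterm hs1, hmterm]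
    have hc1 : Qe ((s : ℤ) - 1) = Qe (((s - 1 : ℕ) : ℤ)) := by
      congr 1
      omega
    have hc2 : Qe (((m + 1 : ℕ) : ℤ) - 1) = Qe ((m : ℤ)) := by
      congr 1
      push_cast
      ring
    rw [hc1, hc2]
    have heven : (-1 : Rng p (m + 1)) ^ (m + 1 + m + 1) = 1 :=
      Even.neg_one_pow ⟨m + 1, by ring⟩
    have hodd' : (-1 : Rng p (m + 1)) ^ (m + 1 + (s - 1) + 1) * (-1 : Rng p (m + 1)) ^ (m - s)
        = -1 := by
      rw [← pow_add, show m + 1 + (s - 1) + 1 + (m - s) = 2 * m + 1 from by omega]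
      exact Odd.neg_one_pow ⟨m, by ring⟩
    calc (-1 : Rng p (m + 1)) ^ (m + 1 + (s - 1) + 1) * Qe (((s - 1 : ℕ) : ℤ)) ^ p *
          ((-1 : Rng p (m + 1)) ^ (m - s) * Lpoly p (m + 1)) +
        (-1 : Rng p (m + 1)) ^ (m + 1 + m + 1) * Qe ((m : ℤ)) ^ p *
          (Lpoly p (m + 1) * Qe ((s : ℤ)))
        = ((-1 : Rng p (m + 1)) ^ (m + 1 + (s - 1) + 1) * (-1 : Rng p (m + 1)) ^ (m - s)) *
            Qe (((s - 1 : ℕ) : ℤ)) ^ p * Lpoly p (m + 1) +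
          ((-1 : Rng p (m + 1)) ^ (m + 1 + m + 1)) * Qe ((m : ℤ)) ^ p *
            (Lpoly p (m + 1) * Qe ((s : ℤ))) := by ring
      _ = Lpoly p (m + 1) * (Qe ((m : ℤ)) ^ p * Qe ((s : ℤ)) - Qe (((s - 1 : ℕ) : ℤ)) ^ p) := by
          rw [hodd', heven]
          ring
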